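/- For all τ,ω ∈ ℂ with |τ| = 1 and |ω| ≤ 1, the denominator 2(1 − τz₁) − ω²z₂² does not vanish on 𝔹₂, the function F_{τ,ω} is holomorphic on 𝔹₂, maps 𝔹₂ into 𝔻, and satisfies F_{τ,ω}(z₁,0) = z₁ for every z₁ ∈ 𝔻. -/

import Mathlib

/-!
Put `u = τ z₁` and `w = ω² z₂²`. Since `τ̄ τ = 1`, `F_{τ,ω}(z) = τ̄ φ(u, w)` with
`φ(u, w) = (2u(1 - u) - w) / (2(1 - u) - w)`, and `‖u‖² + ‖w‖ ≤ ‖z₁‖² + ‖z₂‖² < 1`.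
The identity
`|2(1 - u) - w|² - |2u(1 - u) - w|² = 4|1 - u|²(1 - |u|²) - 4 Re((1 - u)² w̄)`
bounds the left side below by `4|1 - u|²(1 - |u|² - |w|) > 0`, so the numerator of `φ` is
strictly smaller than its denominator in modulus.
-/

open Metric Set Complex

noncomputable section

/-- `ℂⁿ` with the Euclidean norm; `𝔹ₙ` is `Metric.ball 0 1` in this space. -/
abbrev En (n : ℕ) := EuclideanSpace ℂ (Fin n)

/-- The Möbius map `m_a` interchanging `0` and `a`. -/
def mob (a z : ℂ) : ℂ := (a - z) / (1 - (starRingEnd ℂ) a * z)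

/-- A Blaschke product of degree `k`: `z ↦ η * ∏ j, m_{α j}(z)` with `|η| = 1`, `α j ∈ 𝔻`. -/
def IsBlaschke (k : ℕ) (B : ℂ → ℂ) : Prop :=
  ∃ η : ℂ, ‖η‖ = 1 ∧ ∃ α : Fin k → ℂ, (∀ j, α j ∈ ball (0 : ℂ) 1) ∧
    ∀ z : ℂ, B z = η * ∏ j, mob (α j) z

/-- The Pick problem `𝔹ₙ → 𝔻`, `z j ↦ lam j`, is extremal: it is solvable by a holomorphic
map `𝔹ₙ → 𝔻`, but by no holomorphic solution with `sup_{𝔹ₙ} |G| < 1`. -/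
def ExtremalPick {n : ℕ} {ι : Type} (z : ι → En n) (lam : ι → ℂ) : Prop :=
  (∃ F : En n → ℂ, DifferentiableOn ℂ F (ball 0 1) ∧
      MapsTo F (ball (0 : En n) 1) (ball (0 : ℂ) 1) ∧ ∀ j, F (z j) = lam j) ∧
  ¬ ∃ G : En n → ℂ, DifferentiableOn ℂ G (ball 0 1) ∧ (∀ j, G (z j) = lam j) ∧
      ∃ r : ℝ, r < 1 ∧ ∀ x ∈ ball (0 : En n) 1, ‖G x‖ ≤ r

/-- An extremal 3-point Pick problem is non-degenerate if no 2-point subproblem is extremal. -/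
def ExtremalPick3Nondeg {n : ℕ} (z : Fin 3 → En n) (lam : Fin 3 → ℂ) : Prop :=
  ExtremalPick z lam ∧
    ∀ i j : Fin 3, i ≠ j → ¬ ExtremalPick ![z i, z j] ![lam i, lam j]

/-- The function `F_{τ,ω}` from the paper. -/
def Ftau (τ ω : ℂ) (z : En 2) : ℂ :=
  (2 * z 0 * (1 - τ * z 0) - (starRingEnd ℂ) τ * ω ^ 2 * (z 1) ^ 2) /
    (2 * (1 - τ * z 0) - ω ^ 2 * (z 1) ^ 2)

open ComplexConjugate

def phi (u w : ℂ) : ℂ := (2 * u * (1 - u) - w) / (2 * (1 - u) - w)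

lemma normSq_denom_sub_normSq_num (u w : ℂ) :
    normSq (2 * (1 - u) - w) - normSq (2 * u * (1 - u) - w) =
      4 * normSq (1 - u) * (1 - normSq u) - 4 * ((1 - u) ^ 2 * conj w).re := by
  simp only [normSq_apply, sub_re, sub_im, mul_re, mul_im, pow_two, conj_re, conj_im,
    one_re, one_im, re_ofNat, im_ofNat]
  ring

lemma norm_num_lt_norm_denom {u w : ℂ} (h : ‖u‖ ^ 2 + ‖w‖ < 1) :
    ‖2 * u * (1 - u) - w‖ < ‖2 * (1 - u) - w‖ := by
  have hu : 1 - u ≠ 0 := by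
    rw [sub_ne_zero]
    rintro rfl
    norm_num at h
    linarith [norm_nonneg w]
  have hre : ((1 - u) ^ 2 * conj w).re ≤ normSq (1 - u) * ‖w‖ :=
    calc ((1 - u) ^ 2 * conj w).re ≤ ‖(1 - u) ^ 2 * conj w‖ := re_le_norm _
      _ = normSq (1 - u) * ‖w‖ := by rw [norm_mul, norm_pow, norm_conj, normSq_eq_norm_sq]
  have hid := normSq_denom_sub_normSq_num u w
  rw [normSq_eq_norm_sq u] at hid
  rw [← sq_lt_sq₀ (norm_nonneg _) (norm_nonneg _), ← normSq_eq_norm_sq, ← normSq_eq_norm_sq]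
  nlinarith [normSq_pos.mpr hu]

lemma denom_ne_zero {u w : ℂ} (h : ‖u‖ ^ 2 + ‖w‖ < 1) : 2 * (1 - u) - w ≠ 0 :=
  norm_pos_iff.mp ((norm_nonneg _).trans_lt (norm_num_lt_norm_denom h))

lemma norm_phi_lt_one {u w : ℂ} (h : ‖u‖ ^ 2 + ‖w‖ < 1) : ‖phi u w‖ < 1 := by
  rw [phi, norm_div, div_lt_one (norm_pos_iff.mpr (denom_ne_zero h))]
  exact norm_num_lt_norm_denom h

lemma phi_zero_right {u : ℂ} (hu : u ≠ 1) : phi u 0 = u := by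
  have : 1 - u ≠ 0 := sub_ne_zero.mpr hu.symm
  rw [phi, sub_zero, sub_zero]
  field_simp

lemma Ftau_eq_conj_mul_phi {τ : ℂ} (hτ : ‖τ‖ = 1) (ω : ℂ) (z : En 2) :
    Ftau τ ω z = conj τ * phi (τ * z 0) (ω ^ 2 * z 1 ^ 2) := by
  have hτ' : conj τ * τ = 1 := by rw [conj_mul', hτ]; norm_num
  rw [Ftau, phi, mul_div_assoc']
  congr 1
  linear_combination (-2 * z 0 * (1 - τ * z 0)) * hτ'

lemma differentiableOn_Ftau (τ ω : ℂ) {s : Set (En 2)}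
    (hs : ∀ z ∈ s, 2 * (1 - τ * z 0) - ω ^ 2 * z 1 ^ 2 ≠ 0) :
    DifferentiableOn ℂ (Ftau τ ω) s := by
  unfold Ftau
  simp only [div_eq_mul_inv]
  exact (by fun_prop : Differentiable ℂ _).differentiableOn.mul
    (DifferentiableOn.inv (by fun_prop) hs)

lemma norm_sq_add_norm_sq_lt_one {z : En 2} (hz : z ∈ ball (0 : En 2) 1) :
    ‖z 0‖ ^ 2 + ‖z 1‖ ^ 2 < 1 := by
  rw [mem_ball_zero_iff] at hz
  have := EuclideanSpace.norm_sq_eq z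
  rw [Fin.sum_univ_two] at this
  nlinarith [norm_nonneg z]

lemma norm_sq_add_norm_lt_one_of_mem_ball {τ ω : ℂ} (hτ : ‖τ‖ = 1) (hω : ‖ω‖ ≤ 1) {z : En 2}
    (hz : z ∈ ball (0 : En 2) 1) : ‖τ * z 0‖ ^ 2 + ‖ω ^ 2 * z 1 ^ 2‖ < 1 := by
  have hω2 : ‖ω‖ ^ 2 ≤ 1 := pow_le_one₀ (norm_nonneg ω) hω
  rw [norm_mul, hτ, one_mul, norm_mul, norm_pow, norm_pow]
  nlinarith [norm_sq_add_norm_sq_lt_one hz, sq_nonneg ‖z 1‖]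

/-- for `|τ| = 1`, `|ω| ≤ 1`, the denominator of `F_{τ,ω}` does not vanish on
`𝔹₂`, `F_{τ,ω}` is holomorphic on `𝔹₂`, maps `𝔹₂` into `𝔻`, and fixes `(z₁,0) ↦ z₁`. -/
theorem stmt_5 (τ ω : ℂ) (hτ : ‖τ‖ = 1) (hω : ‖ω‖ ≤ 1) :
    (∀ z ∈ ball (0 : En 2) 1, 2 * (1 - τ * z 0) - ω ^ 2 * (z 1) ^ 2 ≠ 0) ∧
    DifferentiableOn ℂ (Ftau τ ω) (ball (0 : En 2) 1) ∧
    MapsTo (Ftau τ ω) (ball (0 : En 2) 1) (ball (0 : ℂ) 1) ∧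
    ∀ z₁ ∈ ball (0 : ℂ) 1, Ftau τ ω (WithLp.toLp 2 ![z₁, 0]) = z₁ := by
  have hden z (hz : z ∈ ball (0 : En 2) 1) :=
    denom_ne_zero (norm_sq_add_norm_lt_one_of_mem_ball hτ hω hz)
  refine ⟨hden, differentiableOn_Ftau τ ω hden, fun z hz => ?_, fun z₁ hz₁ => ?_⟩
  · rw [mem_ball_zero_iff, Ftau_eq_conj_mul_phi hτ, norm_mul, norm_conj, hτ, one_mul]
    exact norm_phi_lt_one (norm_sq_add_norm_lt_one_of_mem_ball hτ hω hz)
  · have hτz : τ * z₁ ≠ 1 := by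
      intro h
      have := congrArg norm h
      rw [norm_mul, hτ, one_mul, norm_one] at this
      exact (mem_ball_zero_iff.mp hz₁).ne this
    rw [Ftau_eq_conj_mul_phi hτ]
    simp only [Matrix.cons_val_zero, Matrix.cons_val_one]
    rw [zero_pow two_ne_zero, mul_zero, phi_zero_right hτz, ← mul_assoc, conj_mul', hτ]
    simp
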